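/- Let \alpha \in (0, \pi/2), \xi_0 \in \mathbb{R}, a > 0, and let \Omega = \{ \xi_0 + \rho e^{i\phi} : \rho > 0, 0 < \phi < \alpha \}. Let \mathcal{K} : [0, \alpha] \to \mathbb{R} be continuously differentiable with \mathcal{K}(0) = 1, \mathcal{K}(\alpha) = 0 and 0 \le \mathcal{K} \le 1, and let R : \mathbb{R} \to \mathbb{C} be continuously differentiable with R' \in L^2(\mathbb{R}). Define E : \Omega \to \mathbb{C} by E(\gamma) = \mathcal{K}(\arg(\gamma - \xi_0))\, R(a\, \mathrm{Re}\,\gamma) + (1 - \mathcal{K}(\arg(\gamma - \xi_0)))\, R(a\, \xi_0). Then for every \gamma \in \Omega the Wirtinger derivative satisfies |\bar{\partial} E(\gamma)| \le \frac{\sup|\mathcal{K}'|}{2}\, \|R'\|_{L^2(\mathbb{R})}\, a^{1/2}\, |\gamma - \xi_0|^{-1/2} + a\, |R'(a\, \mathrm{Re}\,\gamma)|. -/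

import Mathlib

/-!
Write `E = c + k (g - c)` with `k = K ∘ arg (· - ξ₀)`, `g = R (a · Re ·)` and `c = R (a ξ₀)`.
By the Leibniz rule `∂̄E = ∂̄k (g - c) + k ∂̄g`. Since `arg = Im log`, `∂̄ arg z = i / (2 z̄)` has
modulus `1 / (2|z|)`, while `∂̄g = a R'(a Re w) / 2`. Finally `|g(w) - c| ≤ ‖R'‖₂ (a |Re z|)^{1/2}`
by Cauchy–Schwarz applied to `R(x) - R(y) = ∫_y^x R'`, and `|Re z| ≤ |z|`.
-/

open MeasureTheory

/-- The Wirtinger derivative `∂̄F = (∂F/∂x + i ∂F/∂y)/2` with respect to `z̄`. -/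
noncomputable def dbar (F : ℂ → ℂ) (z : ℂ) : ℂ :=
  (deriv (fun x : ℝ => F ((x : ℂ) + z.im * Complex.I)) z.re
    + Complex.I * deriv (fun y : ℝ => F ((z.re : ℂ) + y * Complex.I)) z.im) / 2

open Complex
open scoped ENNReal ComplexConjugate

theorem eLpNorm_one_restrict_Ioc_le {E : Type*} [NormedAddCommGroup E] {g : ℝ → E}
    (hg : AEStronglyMeasurable g volume) {c b : ℝ} :
    eLpNorm g 1 (volume.restrict (Set.Ioc c b)) ≤
      eLpNorm g 2 volume * ENNReal.ofReal (b - c) ^ (1 / 2 : ℝ) :=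
  calc eLpNorm g 1 (volume.restrict (Set.Ioc c b))
      ≤ eLpNorm g 2 (volume.restrict (Set.Ioc c b)) *
          volume.restrict (Set.Ioc c b) Set.univ ^
            (1 / (1 : ℝ≥0∞).toReal - 1 / (2 : ℝ≥0∞).toReal) :=
        eLpNorm_le_eLpNorm_mul_rpow_measure_univ (by norm_num) hg.restrict
    _ ≤ eLpNorm g 2 volume * ENNReal.ofReal (b - c) ^ (1 / 2 : ℝ) := by
        rw [Measure.restrict_apply_univ, Real.volume_Ioc]
        norm_num
        gcongr
        exact Measure.restrict_le_self

theorem norm_sub_le_eLpNorm_deriv_mul_rpow_half {E : Type*} [NormedAddCommGroup E]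
    [NormedSpace ℝ E] [CompleteSpace E] {f : ℝ → E} (hf : ContDiff ℝ 1 f)
    (hf' : MemLp (deriv f) 2 volume) (b c : ℝ) :
    ‖f b - f c‖ ≤ (eLpNorm (deriv f) 2 volume).toReal * |b - c| ^ (1 / 2 : ℝ) := by
  wlog hcb : c ≤ b generalizing b c
  · rw [norm_sub_rev, abs_sub_comm]
    exact this c b (le_of_not_ge hcb)
  have hcont : Continuous (deriv f) := hf.continuous_deriv le_rfl
  have hmeas := hcont.aestronglyMeasurable (μ := volume)
  have hftc : ∫ t in c..b, deriv f t = f b - f c :=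
    intervalIntegral.integral_deriv_eq_sub
      (fun x _ => (hf.differentiable one_ne_zero).differentiableAt) (hcont.intervalIntegrable c b)
  rw [← hftc, intervalIntegral.integral_of_le hcb, abs_of_nonneg (sub_nonneg.2 hcb)]
  calc ‖∫ t in Set.Ioc c b, deriv f t‖
      ≤ (eLpNorm (deriv f) 1 (volume.restrict (Set.Ioc c b))).toReal := by
        rw [eLpNorm_one_eq_lintegral_enorm, ← integral_norm_eq_lintegral_enorm hmeas.restrict]
        exact norm_integral_le_integral_norm _
    _ ≤ (eLpNorm (deriv f) 2 volume * ENNReal.ofReal (b - c) ^ (1 / 2 : ℝ)).toReal :=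
        ENNReal.toReal_mono (by finiteness [hf'.2.ne]) (eLpNorm_one_restrict_Ioc_le hmeas)
    _ = _ := by
        rw [ENNReal.toReal_mul, ← ENNReal.toReal_rpow, ENNReal.toReal_ofReal (sub_nonneg.2 hcb)]

theorem IsCompact.le_biSup {α β : Type*} [ConditionallyCompleteLinearOrder α] [TopologicalSpace α]
    [OrderTopology α] [TopologicalSpace β] {s : Set β} (hs : IsCompact s) {f : β → α}
    (hf : ContinuousOn f s) {x : β} (hx : x ∈ s) : f x ≤ ⨆ y ∈ s, f y := by
  refine le_ciSup₂ (f := fun y (_ : y ∈ s) => f y) ((hs.bddAbove_image hf).mono ?_) x hx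
  rintro _ ⟨_, ⟨y, rfl⟩, ⟨hy, rfl⟩⟩
  exact ⟨y, hy, rfl⟩

theorem hasFDerivAt_arg {z : ℂ} (hz : z ∈ slitPlane) :
    HasFDerivAt arg (imCLM.comp ((z⁻¹ : ℂ) • (1 : ℂ →L[ℝ] ℂ))) z := by
  have hlog := (hasDerivAt_log hz).complexToReal_fderiv
  have : arg = fun w => (log w).im := funext fun w => (log_im w).symm
  rw [this]
  exact imCLM.hasFDerivAt.comp z hlog

theorem dbar_eq_of_hasFDerivAt {F : ℂ → ℂ} {L : ℂ →L[ℝ] ℂ} {w : ℂ} (hF : HasFDerivAt F L w) :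
    dbar F w = (L 1 + I * L I) / 2 := by
  have hx : HasDerivAt (fun x : ℝ => (x : ℂ) + w.im * I) 1 w.re :=
    ofRealCLM.hasDerivAt.add_const _
  have hy : HasDerivAt (fun y : ℝ => (w.re : ℂ) + y * I) I w.im := by
    simpa using (ofRealCLM.hasDerivAt.mul_const I).const_add (w.re : ℂ)
  have hFx : HasDerivAt (fun x : ℝ => F ((x : ℂ) + w.im * I)) (L 1) w.re :=
    hF.comp_hasDerivAt_of_eq w.re hx (re_add_im w).symm
  have hFy : HasDerivAt (fun y : ℝ => F ((w.re : ℂ) + y * I)) (L I) w.im :=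
    hF.comp_hasDerivAt_of_eq w.im hy (re_add_im w).symm
  rw [dbar, hFx.deriv, hFy.deriv]

theorem dbar_mul {F G : ℂ → ℂ} {w : ℂ} (hF : DifferentiableAt ℝ F w)
    (hG : DifferentiableAt ℝ G w) :
    dbar (fun z => F z * G z) w = dbar F w * G w + F w * dbar G w := by
  rw [show dbar (fun z => F z * G z) w = _ from
      dbar_eq_of_hasFDerivAt (hF.hasFDerivAt.mul hG.hasFDerivAt),
    dbar_eq_of_hasFDerivAt hF.hasFDerivAt, dbar_eq_of_hasFDerivAt hG.hasFDerivAt]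
  simp only [add_apply, smul_apply, smul_eq_mul]
  ring

theorem dbar_const_add (F : ℂ → ℂ) (c w : ℂ) : dbar (fun z => c + F z) w = dbar F w := by
  simp only [dbar, deriv_const_add]

theorem dbar_sub_const (F : ℂ → ℂ) (c w : ℂ) : dbar (fun z => F z - c) w = dbar F w := by
  simp only [dbar, deriv_sub_const]

theorem dbar_comp_re (f : ℝ → ℂ) (w : ℂ) : dbar (fun z => f z.re) w = deriv f w.re / 2 := by
  simp [dbar]

theorem dbar_ofReal_comp {φ : ℂ → ℝ} {k : ℝ → ℝ} {k' : ℝ} {w : ℂ}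
    (hφ : DifferentiableAt ℝ φ w) (hk : HasDerivAt k k' (φ w)) :
    dbar (fun z => (k (φ z) : ℂ)) w = k' * dbar (fun z => (φ z : ℂ)) w := by
  rw [show dbar (fun z => (k (φ z) : ℂ)) w = _ from dbar_eq_of_hasFDerivAt
      (ofRealCLM.hasFDerivAt.comp w (hk.hasFDerivAt.comp w hφ.hasFDerivAt)),
    show dbar (fun z => (φ z : ℂ)) w = _ from
      dbar_eq_of_hasFDerivAt (ofRealCLM.hasFDerivAt.comp w hφ.hasFDerivAt)]
  simp only [ContinuousLinearMap.comp_apply, ContinuousLinearMap.toSpanSingleton_apply,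
    smul_eq_mul, ofRealCLM_apply, ofReal_mul]
  ring

theorem dbar_ofReal_arg_sub {ξ w : ℂ} (hw : w - ξ ∈ slitPlane) :
    dbar (fun z => ((z - ξ).arg : ℂ)) w = I * conj (w - ξ)⁻¹ / 2 := by
  have h := ofRealCLM.hasFDerivAt.comp w
    ((hasFDerivAt_arg hw).comp w ((hasFDerivAt_id w).sub_const ξ))
  refine (dbar_eq_of_hasFDerivAt h).trans ?_
  generalize w - ξ = u
  congr 1
  apply Complex.ext <;> simp [neg_div]

theorem differentiableAt_arg_sub {ξ w : ℂ} (hw : w - ξ ∈ slitPlane) :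
    DifferentiableAt ℝ (fun z => (z - ξ).arg) w :=
  ((hasFDerivAt_arg hw).comp w ((hasFDerivAt_id w).sub_const ξ)).differentiableAt

theorem dbar_angularInterpolation {K : ℝ → ℝ} {g : ℂ → ℂ} {c ξ w : ℂ} (hw : w - ξ ∈ slitPlane)
    (hK : DifferentiableAt ℝ K (w - ξ).arg) (hg : DifferentiableAt ℝ g w) :
    dbar (fun z => (K (z - ξ).arg : ℂ) * g z + (1 - (K (z - ξ).arg : ℂ)) * c) w =
      deriv K (w - ξ).arg * (I * conj (w - ξ)⁻¹ / 2) * (g w - c) + K (w - ξ).arg * dbar g w := by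
  have hfun : (fun z => (K (z - ξ).arg : ℂ) * g z + (1 - (K (z - ξ).arg : ℂ)) * c) =
      fun z => c + (K (z - ξ).arg : ℂ) * (g z - c) := by
    funext z
    ring
  have hKarg : DifferentiableAt ℝ (fun z => (K (z - ξ).arg : ℂ)) w :=
    ofRealCLM.differentiableAt.comp w (hK.comp w (differentiableAt_arg_sub hw))
  rw [hfun, dbar_const_add, dbar_mul hKarg (hg.sub_const c),
    dbar_ofReal_comp (differentiableAt_arg_sub hw) hK.hasDerivAt, dbar_ofReal_arg_sub hw,
    dbar_sub_const]

theorem norm_comp_mul_re_sub_le {E : Type*} [NormedAddCommGroup E] [NormedSpace ℝ E]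
    [CompleteSpace E] {f : ℝ → E} (hf : ContDiff ℝ 1 f) (hf' : MemLp (deriv f) 2 volume)
    {a : ℝ} (ha : 0 ≤ a) (w : ℂ) (x₀ : ℝ) :
    ‖f (a * w.re) - f (a * x₀)‖ ≤
      (eLpNorm (deriv f) 2 volume).toReal * a ^ (1 / 2 : ℝ) * ‖w - x₀‖ ^ (1 / 2 : ℝ) := by
  have hre : |a * w.re - a * x₀| ≤ a * ‖w - x₀‖ := by
    rw [← mul_sub, abs_mul, abs_of_nonneg ha]
    gcongr
    simpa using abs_re_le_norm (w - x₀)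
  calc ‖f (a * w.re) - f (a * x₀)‖
      ≤ (eLpNorm (deriv f) 2 volume).toReal * |a * w.re - a * x₀| ^ (1 / 2 : ℝ) :=
        norm_sub_le_eLpNorm_deriv_mul_rpow_half hf hf' _ _
    _ ≤ (eLpNorm (deriv f) 2 volume).toReal * (a * ‖w - x₀‖) ^ (1 / 2 : ℝ) := by gcongr
    _ = _ := by rw [Real.mul_rpow ha (norm_nonneg _), mul_assoc]

theorem norm_dbar_angularInterpolation_le {K : ℝ → ℝ} {g : ℂ → ℂ} {c ξ w : ℂ}
    (hw : w - ξ ∈ slitPlane) (hK : DifferentiableAt ℝ K (w - ξ).arg)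
    (hg : DifferentiableAt ℝ g w) (hK1 : |K (w - ξ).arg| ≤ 1) :
    ‖dbar (fun z => (K (z - ξ).arg : ℂ) * g z + (1 - (K (z - ξ).arg : ℂ)) * c) w‖ ≤
      |deriv K (w - ξ).arg| / 2 * ‖w - ξ‖⁻¹ * ‖g w - c‖ + ‖dbar g w‖ := by
  rw [dbar_angularInterpolation hw hK hg]
  refine (norm_add_le _ _).trans ?_
  simp only [norm_mul, norm_div, norm_inv, norm_I, Complex.norm_conj, Complex.norm_real,
    Real.norm_eq_abs, Complex.norm_ofNat, one_mul]
  gcongr ?_ + ?_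
  · exact le_of_eq (by ring)
  · exact mul_le_of_le_one_left (norm_nonneg _) hK1

theorem dbar_extension_estimate_painleve_general (α ξ₀ a : ℝ)
    (hα' : α < Real.pi / 2) (ha : 0 < a)
    (Ω : Set ℂ)
    (hΩ : Ω = {w : ℂ | 0 < (w - (ξ₀ : ℂ)).arg ∧ (w - (ξ₀ : ℂ)).arg < α})
    (K : ℝ → ℝ) (hK : ContDiff ℝ 1 K)
    (hK01 : ∀ x ∈ Set.Icc (0:ℝ) α, K x ∈ Set.Icc (0:ℝ) 1)
    (R : ℝ → ℂ) (hR : ContDiff ℝ 1 R) (hR2 : MemLp (deriv R) 2 volume)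
    (E : ℂ → ℂ)
    (hE : ∀ w, E w = (K ((w - (ξ₀ : ℂ)).arg) : ℂ) * R (a * w.re)
        + (1 - (K ((w - (ξ₀ : ℂ)).arg) : ℂ)) * R (a * ξ₀)) :
    ∀ w ∈ Ω, ‖dbar E w‖ ≤
      (⨆ x ∈ Set.Icc (0:ℝ) α, |deriv K x|) / 2 *
          (eLpNorm (deriv R) 2 volume).toReal * a ^ ((1:ℝ)/2) *
          ‖w - (ξ₀ : ℂ)‖ ^ (-(1:ℝ)/2)
        + a * ‖deriv R (a * w.re)‖ := by
  subst hΩ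
  rintro w ⟨harg_pos, harg_lt⟩
  set z := w - (ξ₀ : ℂ)
  have hz0 : z ≠ 0 := fun h => by simp [h] at harg_pos
  have hz : z ∈ slitPlane := mem_slitPlane_iff_arg.2 ⟨by linarith [Real.pi_pos], hz0⟩
  have hθ : z.arg ∈ Set.Icc 0 α := ⟨harg_pos.le, harg_lt.le⟩
  have hKθ : |K z.arg| ≤ 1 := abs_le.2 ⟨by linarith [(hK01 _ hθ).1], (hK01 _ hθ).2⟩
  have hK'θ : |deriv K z.arg| ≤ ⨆ x ∈ Set.Icc (0:ℝ) α, |deriv K x| :=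
    isCompact_Icc.le_biSup (hK.continuous_deriv le_rfl).abs.continuousOn hθ
  have hg : DifferentiableAt ℝ (fun z : ℂ => R (a * z.re)) w :=
    (hR.differentiable one_ne_zero).differentiableAt.comp w (by fun_prop)
  have hdbar_g : ‖dbar (fun z : ℂ => R (a * z.re)) w‖ ≤ a * ‖deriv R (a * w.re)‖ := by
    rw [dbar_comp_re (fun x => R (a * x)), deriv_comp_mul_left, norm_div, norm_smul,
      Real.norm_of_nonneg ha.le, Complex.norm_ofNat]
    exact half_le_self (by positivity)
  have hpow : ‖z‖⁻¹ * ‖z‖ ^ (1 / 2 : ℝ) = ‖z‖ ^ (-(1:ℝ)/2) := by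
    rw [← Real.rpow_neg_one, ← Real.rpow_add (norm_pos_iff.2 hz0)]
    norm_num
  rw [funext hE]
  refine (norm_dbar_angularInterpolation_le hz ((hK.differentiable one_ne_zero) _) hg hKθ).trans ?_
  have hM : 0 ≤ ⨆ x ∈ Set.Icc (0:ℝ) α, |deriv K x| := (abs_nonneg _).trans hK'θ
  calc _ ≤ (⨆ x ∈ Set.Icc (0:ℝ) α, |deriv K x|) / 2 * ‖z‖⁻¹ *
          ((eLpNorm (deriv R) 2 volume).toReal * a ^ (1 / 2 : ℝ) * ‖z‖ ^ (1 / 2 : ℝ))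
        + a * ‖deriv R (a * w.re)‖ := by
        gcongr
        exact norm_comp_mul_re_sub_le hR hR2 ha.le w ξ₀
    _ = _ := by
        rw [← hpow]
        ring

/-- Bound on the `∂̄`-derivative of the lens-opening extension in the
Painlevé region, with rescaling factor `a = (nt)^{-1/n}`. -/
theorem dbar_extension_estimate_painleve (α ξ₀ a : ℝ)
    (hα : 0 < α) (hα' : α < Real.pi / 2) (ha : 0 < a)
    (Ω : Set ℂ)
    (hΩ : Ω = {w : ℂ | 0 < (w - (ξ₀ : ℂ)).arg ∧ (w - (ξ₀ : ℂ)).arg < α})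
    (K : ℝ → ℝ) (hK : ContDiff ℝ 1 K) (hK0 : K 0 = 1) (hKα : K α = 0)
    (hK01 : ∀ x ∈ Set.Icc (0:ℝ) α, K x ∈ Set.Icc (0:ℝ) 1)
    (R : ℝ → ℂ) (hR : ContDiff ℝ 1 R) (hR2 : MemLp (deriv R) 2 volume)
    (E : ℂ → ℂ)
    (hE : ∀ w, E w = (K ((w - (ξ₀ : ℂ)).arg) : ℂ) * R (a * w.re)
        + (1 - (K ((w - (ξ₀ : ℂ)).arg) : ℂ)) * R (a * ξ₀)) :
    ∀ w ∈ Ω, ‖dbar E w‖ ≤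
      (⨆ x ∈ Set.Icc (0:ℝ) α, |deriv K x|) / 2 *
          (eLpNorm (deriv R) 2 volume).toReal * a ^ ((1:ℝ)/2) *
          ‖w - (ξ₀ : ℂ)‖ ^ (-(1:ℝ)/2)
        + a * ‖deriv R (a * w.re)‖ :=
  dbar_extension_estimate_painleve_general α ξ₀ a hα' ha Ω hΩ K hK hK01 R hR hR2 E hE
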